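/- Let n be a positive integer, δ ∈ {0, 1}, and β ∈ ℂ \ {0} with |β| ≥ ((1 + e²)^{3/2}/(√2 e))^n (√2 + ω₀^δ). If p ∈ ℋ satisfies (p(z))^δ + β (z p′(z))^n ≺ √(1 + z) (principal branch), then p(z) ≺ 𝔅(z). -/

import Mathlib

open Complex

noncomputable section

/-- The open unit disk in the complex plane. -/
def unitDisk : Set ℂ := Metric.ball 0 1

/-- `f` is subordinate to `g` on the unit disk: there is an analytic Schwarz function `w`
with `w 0 = 0`, `|w z| < 1` on the disk, and `f = g ∘ w` on the disk. -/
def Subord (f g : ℂ → ℂ) : Prop :=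
  ∃ w : ℂ → ℂ, DifferentiableOn ℂ w unitDisk ∧ w 0 = 0 ∧
    (∀ z ∈ unitDisk, ‖w z‖ < 1) ∧ ∀ z ∈ unitDisk, f z = g (w z)

/-- The function `𝔅(z) = √(1 + tanh z)` (principal branch). -/
def bean (z : ℂ) : ℂ := (1 + Complex.tanh z) ^ ((1 : ℂ) / 2)

/-- `R₀ = e √(2/(e² - 1))`. -/
def R₀ : ℝ := Real.exp 1 * Real.sqrt (2 / (Real.exp 1 ^ 2 - 1))

/-- `ω₀ = max_{θ ∈ [0, 2π)} |𝔅(e^{iθ})|`. -/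
def ω₀ : ℝ :=
  sSup ((fun θ : ℝ => ‖bean (Complex.exp (θ * Complex.I))‖) '' Set.Ico 0 (2 * Real.pi))

/-!
Put `q(z) = z p'(z)`. Since `√(1 + z)` maps the unit disk into the disk of radius `√2`, the
subordination gives `|β| |q|ⁿ ≤ √2 + |p|^δ ≤ √2 + 1 + |p - 1|`, and the hypothesis on `β` gives
`|β| ≥ 6ⁿ (√2 + 1)`. Let `x = sup |p - 1|` over a disk `|z| < R < 1`. As `q(z) / z = p'(z)`, the
Schwarz lemma bounds `|p'|` by `sup |q| / R`, so `x ≤ sup |q| ≤ ((√2 + 1 + x) / |β|)^(1/n)`, which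
forces `x ≤ 1/5`. On `|u - 1| ≤ 1/5` the map `u ↦ artanh (u² - 1)` inverts `𝔅` and takes values in
the unit disk, so `artanh (p² - 1)` is the Schwarz function of `p ≺ 𝔅`.
-/

open Metric Set

theorem mem_unitDisk {z : ℂ} : z ∈ unitDisk ↔ ‖z‖ < 1 := mem_ball_zero_iff

theorem dslope_id_mul {g : ℂ → ℂ} (hg : DifferentiableAt ℂ g 0) (ζ : ℂ) :
    dslope (fun z => z * g z) 0 ζ = g ζ := by
  rcases eq_or_ne ζ 0 with rfl | hζ
  · rw [dslope_same]
    simpa using ((hasDerivAt_id' (0 : ℂ)).fun_mul hg.hasDerivAt).deriv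
  · simpa using dslope_sub_smul_of_ne g hζ

theorem norm_sub_le_of_norm_mul_deriv_le {f : ℂ → ℂ} {R K : ℝ}
    (hf : DifferentiableOn ℂ f (ball 0 R)) (hK : ∀ z ∈ ball (0 : ℂ) R, ‖z * deriv f z‖ ≤ K)
    {z : ℂ} (hz : z ∈ ball (0 : ℂ) R) : ‖f z - f 0‖ ≤ K := by
  have hR : 0 < R := pos_of_mem_ball hz
  have hf' : DifferentiableOn ℂ (deriv f) (ball 0 R) := hf.deriv isOpen_ball
  have hK0 : 0 ≤ K := by simpa using hK 0 (mem_ball_self hR)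
  have hderiv : ∀ ζ ∈ ball (0 : ℂ) R, ‖deriv f ζ‖ ≤ K / R := fun ζ hζ => by
    rw [← dslope_id_mul (hf'.differentiableAt (isOpen_ball.mem_nhds (mem_ball_self hR)))]
    refine Complex.norm_dslope_le_div_of_mapsTo_ball (differentiableOn_id.mul hf')
      (fun w hw => ?_) hζ
    simpa using hK w hw
  calc ‖f z - f 0‖ ≤ K / R * ‖z - 0‖ :=
        Convex.norm_image_sub_le_of_norm_deriv_le
          (fun w hw => hf.differentiableAt (isOpen_ball.mem_nhds hw)) hderiv (convex_ball 0 R)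
          (mem_ball_self hR) hz
    _ ≤ K / R * R := by gcongr; simpa using (mem_ball_zero_iff.1 hz).le
    _ = K := div_mul_cancel₀ K hR.ne'

theorem le_one_fifth_of_six_mul_pow_mul_le {n : ℕ} {c x : ℝ} (hn : n ≠ 0) (hc : 1 ≤ c)
    (h : (6 * x) ^ n * c ≤ c + x) : x ≤ 1 / 5 := by
  by_contra! hx
  have : 6 * x ≤ (6 * x) ^ n := le_self_pow₀ (by linarith) hn
  nlinarith

theorem norm_sub_one_le_one_fifth_of_mul_deriv_pow_le {p : ℂ → ℂ} {n : ℕ} {c : ℝ} (hn : n ≠ 0)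
    (hc : 1 ≤ c) (hp : DifferentiableOn ℂ p unitDisk) (hp0 : p 0 = 1)
    (h : ∀ z ∈ unitDisk, 6 ^ n * c * ‖z * deriv p z‖ ^ n ≤ c + ‖p z - 1‖)
    {z : ℂ} (hz : z ∈ unitDisk) : ‖p z - 1‖ ≤ 1 / 5 := by
  obtain ⟨R, hzR, hR1⟩ := exists_between (mem_unitDisk.1 hz)
  have hzR' : z ∈ ball (0 : ℂ) R := mem_ball_zero_iff.2 hzR
  have hball : ball (0 : ℂ) R ⊆ unitDisk := ball_subset_ball hR1.le
  have hbdd : BddAbove ((fun ζ => ‖p ζ - 1‖) '' ball 0 R) :=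
    ((isCompact_closedBall 0 R).bddAbove_image
      ((hp.continuousOn.mono (closedBall_subset_ball hR1)).sub continuousOn_const).norm).mono
      (image_mono ball_subset_closedBall)
  set x := sSup ((fun ζ => ‖p ζ - 1‖) '' ball 0 R)
  have hle_x : ∀ ζ ∈ ball (0 : ℂ) R, ‖p ζ - 1‖ ≤ x := fun ζ hζ =>
    le_csSup hbdd (mem_image_of_mem _ hζ)
  have hx0 : 0 ≤ x := (norm_nonneg _).trans (hle_x z hzR')
  set K := ((c + x) / (6 ^ n * c)) ^ (n⁻¹ : ℝ)
  have hKn : K ^ n = (c + x) / (6 ^ n * c) := Real.rpow_inv_natCast_pow (by positivity) hn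
  have hqK : ∀ ζ ∈ ball (0 : ℂ) R, ‖ζ * deriv p ζ‖ ≤ K := fun ζ hζ => by
    refine (pow_le_pow_iff_left₀ (norm_nonneg _) (by positivity) hn).1 ?_
    rw [hKn, le_div_iff₀' (by positivity)]
    linarith [h ζ (hball hζ), hle_x ζ hζ]
  have hxK : x ≤ K := csSup_le (nonempty_of_mem hzR' |>.image _) <| forall_mem_image.2
    fun ζ hζ => by simpa [hp0] using norm_sub_le_of_norm_mul_deriv_le (hp.mono hball) hqK hζ
  refine (hle_x z hzR').trans (le_one_fifth_of_six_mul_pow_mul_le hn hc ?_)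
  have hxn := pow_le_pow_left₀ hx0 hxK n
  rw [hKn, le_div_iff₀' (by positivity)] at hxn
  calc (6 * x) ^ n * c = 6 ^ n * c * x ^ n := by ring
    _ ≤ c + x := hxn

namespace Complex

def artanh (t : ℂ) : ℂ := log ((1 + t) / (1 - t)) / 2

theorem tanh_artanh {t : ℂ} (h₁ : t ≠ 1) (h₂ : t ≠ -1) : tanh (artanh t) = t := by
  have h1t : 1 - t ≠ 0 := sub_ne_zero.2 h₁.symm
  have h1t' : 1 + t ≠ 0 := by rwa [add_comm, ← sub_neg_eq_add, sub_ne_zero]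
  have hE : exp (artanh t) ^ 2 * (1 - t) = 1 + t := by
    rw [← exp_nat_mul, artanh, Nat.cast_ofNat, mul_div_cancel₀ _ two_ne_zero,
      exp_log (div_ne_zero h1t' h1t), div_mul_cancel₀ _ h1t]
  have hE0 := exp_ne_zero (artanh t)
  rw [tanh_eq_sinh_div_cosh, sinh, cosh, exp_neg]
  generalize exp (artanh t) = E at hE hE0 ⊢
  have hE2 : E ^ 2 + 1 ≠ 0 := fun h =>
    (two_ne_zero : (2 : ℂ) ≠ 0) (by linear_combination (1 - t) * h - hE)
  field_simp
  linear_combination hE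

theorem re_one_add_div_one_sub_pos {t : ℂ} (ht : ‖t‖ < 1) : 0 < ((1 + t) / (1 - t)).re := by
  have h1t : 1 - t ≠ 0 := fun h => by simp [← sub_eq_zero.1 h] at ht
  have hnum : (1 + t).re * (1 - t).re + (1 + t).im * (1 - t).im = 1 - ‖t‖ ^ 2 := by
    simp only [add_re, sub_re, add_im, sub_im, one_re, one_im, Complex.sq_norm, normSq_apply]
    ring
  rw [div_re, ← add_div, hnum]
  exact div_pos (by nlinarith [norm_nonneg t]) (normSq_pos.2 h1t)

theorem differentiableAt_artanh {t : ℂ} (ht : ‖t‖ < 1) : DifferentiableAt ℂ artanh t := by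
  have h1t : 1 - t ≠ 0 := fun h => by simp [← sub_eq_zero.1 h] at ht
  unfold artanh
  exact (((differentiableAt_const 1).add differentiableAt_id).div
    ((differentiableAt_const 1).sub differentiableAt_id) h1t).clog
    (Or.inl (re_one_add_div_one_sub_pos ht)) |>.div_const 2

theorem norm_log_lt_two {r : ℂ} (hre : 0 ≤ r.re) (h₁ : Real.exp (-1) < ‖r‖)
    (h₂ : ‖r‖ < Real.exp 1) : ‖log r‖ < 2 := by
  have hr : 0 < ‖r‖ := (Real.exp_pos _).trans h₁
  have hlog : |Real.log ‖r‖| < 1 := abs_lt.2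
    ⟨(Real.lt_log_iff_exp_lt hr).2 h₁, (Real.log_lt_iff_lt_exp hr).2 h₂⟩
  have harg : |arg r| ≤ Real.pi / 2 := abs_arg_le_pi_div_two_iff.2 hre
  have hsq : ‖log r‖ ^ 2 < 2 ^ 2 := by
    rw [Complex.sq_norm, normSq_apply, log_re, log_im]
    nlinarith [abs_nonneg (Real.log ‖r‖), abs_nonneg (arg r), sq_abs (Real.log ‖r‖),
      sq_abs (arg r), Real.pi_lt_d2]
  exact lt_of_pow_lt_pow_left₀ 2 zero_le_two hsq

theorem norm_artanh_lt_one {t : ℂ} (ht : ‖t‖ ≤ 11 / 25) : ‖artanh t‖ < 1 := by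
  have hadd : ‖1 + t‖ ≤ 1 + ‖t‖ := by simpa using norm_add_le (1 : ℂ) t
  have hadd' : 1 - ‖t‖ ≤ ‖1 + t‖ := by simpa using norm_sub_norm_le (1 : ℂ) (-t)
  have hsub : ‖1 - t‖ ≤ 1 + ‖t‖ := by simpa using norm_sub_le (1 : ℂ) t
  have hsub' : 1 - ‖t‖ ≤ ‖1 - t‖ := by simpa using norm_sub_norm_le (1 : ℂ) t
  have he := Real.exp_one_gt_d9
  have he' : Real.exp (-1) * Real.exp 1 = 1 := by rw [← Real.exp_add]; simp
  have hlog : ‖log ((1 + t) / (1 - t))‖ < 2 := by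
    refine norm_log_lt_two (re_one_add_div_one_sub_pos (by linarith)).le ?_ ?_ <;>
      rw [norm_div]
    · rw [lt_div_iff₀ (by linarith)]
      nlinarith [Real.exp_pos (-1)]
    · rw [div_lt_iff₀ (by linarith)]
      nlinarith
  rw [artanh, norm_div, Complex.norm_two]
  linarith

end Complex

theorem norm_cpow_one_half (x : ℂ) : ‖x ^ ((1 : ℂ) / 2)‖ = √‖x‖ := by
  rw [Real.sqrt_eq_rpow, ← norm_cpow_real]
  norm_num

theorem bean_artanh_sq_sub_one {u : ℂ} (hu : 0 < u.re) (h2 : u ^ 2 ≠ 2) :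
    bean (artanh (u ^ 2 - 1)) = u := by
  have hu0 : u ^ 2 ≠ 0 := pow_ne_zero 2 fun h => by simp [h] at hu
  rw [bean, tanh_artanh (by contrapose! h2; linear_combination h2)
    (by contrapose! hu0; linear_combination hu0), add_sub_cancel, one_div, sq_cpow_two_inv hu]

theorem subord_bean_of_norm_sub_one_le {p : ℂ → ℂ} (hp : DifferentiableOn ℂ p unitDisk)
    (hp0 : p 0 = 1) (h : ∀ z ∈ unitDisk, ‖p z - 1‖ ≤ 1 / 5) : Subord p bean := by
  have hsq : ∀ z ∈ unitDisk, ‖p z ^ 2 - 1‖ ≤ 11 / 25 := fun z hz => by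
    have hadd : ‖p z + 1‖ ≤ 11 / 5 :=
      calc ‖p z + 1‖ = ‖(p z - 1) + 2‖ := by ring_nf
        _ ≤ ‖p z - 1‖ + 2 := by simpa using norm_add_le (p z - 1) 2
        _ ≤ 11 / 5 := by linarith [h z hz]
    rw [show p z ^ 2 - 1 = (p z - 1) * (p z + 1) by ring, norm_mul]
    nlinarith [h z hz, norm_nonneg (p z - 1), norm_nonneg (p z + 1)]
  have hre : ∀ z ∈ unitDisk, 0 < (p z).re := fun z hz => by
    have := (abs_re_le_norm (p z - 1)).trans (h z hz)
    rw [sub_re, one_re, abs_le] at this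
    linarith
  refine ⟨fun z => artanh (p z ^ 2 - 1), fun z hz => ?_, by simp [hp0, artanh],
    fun z hz => norm_artanh_lt_one (hsq z hz), fun z hz => ?_⟩
  · have hpz := hp.differentiableAt (isOpen_ball.mem_nhds hz)
    exact ((differentiableAt_artanh (by linarith [hsq z hz])).comp z
      ((hpz.fun_pow 2).sub_const 1)).differentiableWithinAt
  · refine (bean_artanh_sq_sub_one (hre z hz) fun h2 => ?_).symm
    have := hsq z hz
    rw [h2] at this
    norm_num at this

theorem norm_bean (z : ℂ) : ‖bean z‖ = √‖1 + tanh z‖ := norm_cpow_one_half _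

theorem cosh_ne_zero_of_norm_le_one {z : ℂ} (hz : ‖z‖ ≤ 1) : cosh z ≠ 0 := by
  have hre : (cosh z).re = Real.cosh z.re * Real.cos z.im := by
    rw [← cos_mul_I, cos_eq]
    simp [cos_ofReal_re, mul_comm]
  have him : |z.im| < Real.pi / 2 := by
    linarith [abs_im_le_norm z, Real.pi_gt_three]
  have hcos : 0 < Real.cos z.im := Real.cos_pos_of_mem_Ioo (abs_lt.1 him)
  intro h
  have := congrArg re h
  rw [hre, zero_re] at this
  exact (mul_pos (Real.cosh_pos _) hcos).ne' this

theorem bddAbove_norm_bean_circle :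
    BddAbove ((fun θ : ℝ => ‖bean (exp (θ * I))‖) '' Ico 0 (2 * Real.pi)) := by
  have hcont : Continuous fun θ : ℝ => tanh (exp (θ * I)) := by
    simp only [tanh_eq_sinh_div_cosh]
    exact Continuous.div (by fun_prop) (by fun_prop)
      fun θ => cosh_ne_zero_of_norm_le_one (norm_exp_ofReal_mul_I θ).le
  obtain ⟨M, hM⟩ :=
    isCompact_Icc.bddAbove_image (hcont.norm.continuousOn (s := Icc 0 (2 * Real.pi)))
  refine ⟨√(1 + M), forall_mem_image.2 fun θ hθ => ?_⟩
  rw [norm_bean]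
  refine Real.sqrt_le_sqrt ((norm_add_le _ _).trans ?_)
  simpa using hM (mem_image_of_mem _ (Ico_subset_Icc_self hθ))

theorem one_le_ω₀ : 1 ≤ ω₀ := by
  refine le_csSup_of_le bddAbove_norm_bean_circle ⟨0, ⟨le_rfl, by positivity⟩, rfl⟩ ?_
  have htanh : 0 ≤ Real.tanh 1 := by
    rw [Real.tanh_eq_sinh_div_cosh]
    exact div_nonneg (Real.sinh_nonneg_iff.2 zero_le_one) (Real.cosh_pos 1).le
  dsimp only
  rw [ofReal_zero, zero_mul, exp_zero, norm_bean, Real.one_le_sqrt]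
  refine le_trans ?_ (re_le_norm _)
  have h : (tanh 1).re = Real.tanh 1 := by exact_mod_cast tanh_ofReal_re 1
  simpa [h] using htanh

theorem six_le_one_add_exp_one_sq_rpow_div :
    6 ≤ (1 + Real.exp 1 ^ 2) ^ ((3 : ℝ) / 2) / (√2 * Real.exp 1) := by
  have he := Real.exp_one_gt_d9
  rw [le_div_iff₀ (by positivity)]
  refine (pow_le_pow_iff_left₀ (by positivity) (by positivity) two_ne_zero).1 ?_
  rw [← Real.rpow_natCast ((1 + _) ^ _), ← Real.rpow_mul (by positivity)]
  rw [show (3 : ℝ) / 2 * (2 : ℕ) = (3 : ℕ) by norm_num, Real.rpow_natCast, mul_pow, mul_pow,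
    Real.sq_sqrt zero_le_two]
  have he2 : 0 < Real.exp 1 ^ 2 - 7.38 := by nlinarith
  nlinarith [pow_pos he2 2, pow_pos he2 3]

theorem norm_le_sqrt_two_of_subord_sqrt {f : ℂ → ℂ}
    (hf : Subord f fun z => (1 + z) ^ ((1 : ℂ) / 2)) {z : ℂ} (hz : z ∈ unitDisk) :
    ‖f z‖ ≤ √2 := by
  obtain ⟨w, -, -, hw, hfw⟩ := hf
  rw [hfw z hz, norm_cpow_one_half]
  refine Real.sqrt_le_sqrt ((norm_add_le _ _).trans ?_)
  linarith [norm_one (α := ℂ), hw z hz]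

theorem stmt_11_general (n : ℕ) (hn : 0 < n) (δ : ℕ) (hδ : δ = 0 ∨ δ = 1)
    (β : ℂ)
    (hβ : ((1 + Real.exp 1 ^ 2) ^ ((3 : ℝ) / 2) / (Real.sqrt 2 * Real.exp 1)) ^ n *
        (Real.sqrt 2 + ω₀ ^ δ) ≤ ‖β‖)
    (p : ℂ → ℂ) (hp : DifferentiableOn ℂ p unitDisk) (hp0 : p 0 = 1)
    (hsub : Subord (fun z => p z ^ δ + β * (z * deriv p z) ^ n)
        (fun z => (1 + z) ^ ((1 : ℂ) / 2))) :
    Subord p bean := by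
  have hω : 1 ≤ ω₀ ^ δ := by
    rcases hδ with rfl | rfl
    · simp
    · simpa using one_le_ω₀
  have hβ6 : 6 ^ n * (√2 + 1) ≤ ‖β‖ :=
    le_trans (by gcongr; exact six_le_one_add_exp_one_sq_rpow_div) hβ
  have hpδ : ∀ z, ‖p z ^ δ‖ ≤ 1 + ‖p z - 1‖ := fun z => by
    rcases hδ with rfl | rfl
    · simp
    · simpa using norm_le_norm_add_norm_sub' (p z) 1
  have hc : 1 ≤ √2 + 1 := le_add_of_nonneg_left (Real.sqrt_nonneg 2)
  refine subord_bean_of_norm_sub_one_le hp hp0 fun _ =>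
    norm_sub_one_le_one_fifth_of_mul_deriv_pow_le hn.ne' hc hp hp0 fun z hz => ?_
  calc 6 ^ n * (√2 + 1) * ‖z * deriv p z‖ ^ n ≤ ‖β‖ * ‖z * deriv p z‖ ^ n := by gcongr
    _ = ‖(p z ^ δ + β * (z * deriv p z) ^ n) - p z ^ δ‖ := by
      rw [add_sub_cancel_left, norm_mul β, norm_pow]
    _ ≤ √2 + (1 + ‖p z - 1‖) :=
      (norm_sub_le _ _).trans (add_le_add (norm_le_sqrt_two_of_subord_sqrt hsub hz) (hpδ z))
    _ = √2 + 1 + ‖p z - 1‖ := by ring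

theorem stmt_11 (n : ℕ) (hn : 0 < n) (δ : ℕ) (hδ : δ = 0 ∨ δ = 1)
    (β : ℂ) (hβ0 : β ≠ 0)
    (hβ : ((1 + Real.exp 1 ^ 2) ^ ((3 : ℝ) / 2) / (Real.sqrt 2 * Real.exp 1)) ^ n *
        (Real.sqrt 2 + ω₀ ^ δ) ≤ ‖β‖)
    (p : ℂ → ℂ) (hp : DifferentiableOn ℂ p unitDisk) (hp0 : p 0 = 1)
    (hsub : Subord (fun z => p z ^ δ + β * (z * deriv p z) ^ n)
        (fun z => (1 + z) ^ ((1 : ℂ) / 2))) :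
    Subord p bean :=
  stmt_11_general n hn δ hδ β hβ p hp hp0 hsub
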